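/- Let σ : Z^n × T^n → C be smooth in x. Then σ ∈ M^m_{ρ,Λ} if and only if for all multi-indices α, β ∈ N_0^n and all γ ∈ {0,1}^n there is C_{α,β,γ} > 0 with |k^γ D_x^{(β)} Δ_k^{α+γ} σ(k,x)| ≤ C_{α,β,γ} Λ(k)^{m−ρ|α|} for all (k,x) ∈ Z^n × T^n. -/

import Mathlib

open scoped BigOperators
open MeasureTheory

noncomputable section

variable {n : ℕ}

/-- Forward difference in direction `j`. -/
def fdiff {M : Type*} [AddCommGroup M] (j : Fin n) (f : (Fin n → ℤ) → M) : (Fin n → ℤ) → M :=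
  fun k => f (fun i => k i + if i = j then 1 else 0) - f k

/-- Backward difference in direction `j`. -/
def bdiff {M : Type*} [AddCommGroup M] (j : Fin n) (f : (Fin n → ℤ) → M) : (Fin n → ℤ) → M :=
  fun k => f k - f (fun i => k i - if i = j then 1 else 0)

/-- Iterated forward difference for a multi-index `α`. -/
def fdiffM {M : Type*} [AddCommGroup M] (α : Fin n → ℕ) (f : (Fin n → ℤ) → M) : (Fin n → ℤ) → M :=
  ((List.finRange n).map (fun j => (fdiff j)^[α j])).foldr (· ∘ ·) id f

/-- Iterated backward difference for a multi-index `α`. -/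
def bdiffM {M : Type*} [AddCommGroup M] (α : Fin n → ℕ) (f : (Fin n → ℤ) → M) : (Fin n → ℤ) → M :=
  ((List.finRange n).map (fun j => (bdiff j)^[α j])).foldr (· ∘ ·) id f

/-- Multi-index binomial coefficient. -/
def mchoose (α β : Fin n → ℕ) : ℕ := ∏ j, Nat.choose (α j) (β j)

/-- Length of a multi-index. -/
def mlen (α : Fin n → ℕ) : ℕ := ∑ j, α j

/-- Shift a lattice point by a multi-index. -/
def kadd (k : Fin n → ℤ) (β : Fin n → ℕ) : Fin n → ℤ := fun i => k i + (β i : ℤ)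

/-- Euclidean norm of a lattice point. -/
def znorm (k : Fin n → ℤ) : ℝ := Real.sqrt (∑ j, ((k j : ℝ)) ^ 2)

/-- Partial derivative in direction `j` for functions on `ℝⁿ` (representing `𝕋ⁿ`). -/
def pderiv' (j : Fin n) (g : (Fin n → ℝ) → ℂ) : (Fin n → ℝ) → ℂ :=
  fun x => deriv (fun t => g (Function.update x j t)) (x j)

/-- The operator `D_{x_j} = (1/2πi) ∂_{x_j}`. -/
def DOne (j : Fin n) (g : (Fin n → ℝ) → ℂ) : (Fin n → ℝ) → ℂ :=
  fun x => (1 / (2 * Real.pi * Complex.I)) * pderiv' j g x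

/-- The shifted iterated derivative `D_{x_j}^{(ℓ)} = (D_{x_j} - (ℓ-1)) ⋯ (D_{x_j} - 1) D_{x_j}`. -/
def DShift (j : Fin n) : ℕ → ((Fin n → ℝ) → ℂ) → ((Fin n → ℝ) → ℂ)
  | 0 => id
  | (ℓ + 1) => fun g x => DOne j (DShift j ℓ g) x - (ℓ : ℂ) * DShift j ℓ g x

/-- Multi-index version `D_x^{(β)}`. -/
def DM (β : Fin n → ℕ) (g : (Fin n → ℝ) → ℂ) : (Fin n → ℝ) → ℂ :=
  ((List.finRange n).map (fun j => DShift j (β j))).foldr (· ∘ ·) id g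

/-- A weight function `Λ` on `ℤⁿ` with exponents `μ0 ≤ μ1 ≤ μ`. -/
structure IsWeight (Λ : (Fin n → ℤ) → ℝ) (μ0 μ1 μ : ℝ) : Prop where
  pos : ∀ k, 0 < Λ k
  exp0 : 0 < μ0
  exp01 : μ0 ≤ μ1
  exp1 : μ1 ≤ μ
  lower : ∃ C0 > 0, ∀ k, C0 * (1 + znorm k) ^ μ0 ≤ Λ k
  upper : ∃ C1 > 0, ∀ k, Λ k ≤ C1 * (1 + znorm k) ^ μ1
  diffBound : ∀ α γ : Fin n → ℕ, (∀ j, γ j ≤ 1) →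
    ∃ C > 0, ∀ k, |(∏ j, (k j : ℝ) ^ γ j) * fdiffM (α + γ) Λ k| ≤
      C * Λ k ^ (1 - (mlen α : ℝ) / μ)

/-- `D_x^{(β)} Δ_k^{α} σ` evaluated at `(k, x)`. -/
def symbDiff (σ : (Fin n → ℤ) → (Fin n → ℝ) → ℂ) (α β : Fin n → ℕ)
    (k : Fin n → ℤ) (x : Fin n → ℝ) : ℂ :=
  DM β (fun y => fdiffM α (fun k' => σ k' y) k) x

/-- `k^γ` as a complex number. -/
def kpow (k : Fin n → ℤ) (γ : Fin n → ℕ) : ℂ := ∏ j, (k j : ℂ) ^ γ j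

/-- The weighted symbol class `S^m_{ρ,Λ}(ℤⁿ × 𝕋ⁿ)`. -/
def InS (Λ : (Fin n → ℤ) → ℝ) (ρ m : ℝ) (σ : (Fin n → ℤ) → (Fin n → ℝ) → ℂ) : Prop :=
  (∀ k, ContDiff ℝ (⊤ : ℕ∞) (σ k)) ∧
  ∀ α β : Fin n → ℕ, ∃ C > 0, ∀ k x,
    ‖symbDiff σ α β k x‖ ≤ C * Λ k ^ (m - ρ * (mlen α : ℝ))

/-- The weighted symbol class `M^m_{ρ,Λ}(ℤⁿ × 𝕋ⁿ)`:
`k^γ Δ_k^γ σ ∈ S^m_{ρ,Λ}` for all `γ ∈ {0,1}ⁿ`. -/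
def InM (Λ : (Fin n → ℤ) → ℝ) (ρ m : ℝ) (σ : (Fin n → ℤ) → (Fin n → ℝ) → ℂ) : Prop :=
  ∀ γ : Fin n → ℕ, (∀ j, γ j ≤ 1) →
    InS Λ ρ m (fun k x => kpow k γ * fdiffM γ (fun k' => σ k' x) k)

/-- `M`-ellipticity of a symbol of order `m`. -/
def MElliptic (Λ : (Fin n → ℤ) → ℝ) (m : ℝ) (σ : (Fin n → ℤ) → (Fin n → ℝ) → ℂ) : Prop :=
  ∃ C > 0, ∃ R > 0, ∀ k x, R ≤ znorm k → C * Λ k ^ m ≤ ‖σ k x‖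

/-- `e^{2πit}`. -/
def e2 (t : ℝ) : ℂ := Complex.exp (2 * Real.pi * Complex.I * t)

/-- `k · x`. -/
def dotp (k : Fin n → ℤ) (x : Fin n → ℝ) : ℝ := ∑ j, (k j : ℝ) * x j

/-- The fundamental domain `[0,1]ⁿ` of the torus. -/
def torus (n : ℕ) : Set (Fin n → ℝ) := Set.univ.pi fun _ => Set.Icc 0 1

/-- Discrete Fourier transform. -/
def dft (f : (Fin n → ℤ) → ℂ) (x : Fin n → ℝ) : ℂ := ∑' k, e2 (-(dotp k x)) * f k

/-- The pseudo-differential operator with symbol `σ`. -/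
def psiOp (σ : (Fin n → ℤ) → (Fin n → ℝ) → ℂ) (f : (Fin n → ℤ) → ℂ) : (Fin n → ℤ) → ℂ :=
  fun k => ∫ x in torus n, e2 (dotp k x) * σ k x * dft f x

/-- `ℓ²`-norm (as a tsum expression). -/
def l2norm (f : (Fin n → ℤ) → ℂ) : ℝ := (∑' k, ‖f k‖ ^ 2) ^ (1 / 2 : ℝ)

/-- The Fourier multiplier `Λ(D)^s`, acting diagonally. -/
def lamD (Λ : (Fin n → ℤ) → ℝ) (s : ℝ) (w : (Fin n → ℤ) → ℂ) : (Fin n → ℤ) → ℂ :=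
  fun k => (Λ k ^ s : ℝ) * w k

/-- Membership in the weighted Sobolev space `H^{s,2}_Λ(ℤⁿ)`. -/
def InSob (Λ : (Fin n → ℤ) → ℝ) (s : ℝ) (w : (Fin n → ℤ) → ℂ) : Prop :=
  Memℓp (lamD Λ s w) 2

/-- Sobolev norm `‖w‖_{s,2,Λ}`. -/
def sobNorm (Λ : (Fin n → ℤ) → ℝ) (s : ℝ) (w : (Fin n → ℤ) → ℂ) : ℝ :=
  l2norm (lamD Λ s w)

/-- Rapid decay (Schwartz class) on `ℤⁿ`. -/
def RapidDecay (f : (Fin n → ℤ) → ℂ) : Prop :=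
  ∀ N : ℕ, ∃ C > 0, ∀ k, ‖f k‖ ≤ C * (1 + znorm k) ^ (-(N : ℝ))

/-- Falling factorial `m^{(ℓ)}`. -/
def ffac (m : ℤ) : ℕ → ℤ
  | 0 => 1
  | (ℓ + 1) => ffac m ℓ * (m - ℓ)

end
noncomputable section
namespace MAux
variable {n : ℕ}

/-- Multiplication by the `j`-th coordinate. -/
def mulco (j : Fin n) (f : (Fin n → ℤ) → ℂ) : (Fin n → ℤ) → ℂ := fun k => (k j : ℂ) * f k

def DLd (l : List (Fin n)) (α : Fin n → ℕ) (f : (Fin n → ℤ) → ℂ) : (Fin n → ℤ) → ℂ :=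
  (l.map (fun j => (fdiff j)^[α j])).foldr (· ∘ ·) id f

lemma fdiffM_eq_DLd (α : Fin n → ℕ) (f : (Fin n → ℤ) → ℂ) :
    fdiffM α f = DLd (List.finRange n) α f := rfl

lemma DLd_nil (α : Fin n → ℕ) (f : (Fin n → ℤ) → ℂ) : DLd ([] : List (Fin n)) α f = f := rfl

lemma DLd_cons (i : Fin n) (l : List (Fin n)) (α : Fin n → ℕ) (f : (Fin n → ℤ) → ℂ) :
    DLd (i :: l) α f = (fdiff i)^[α i] (DLd l α f) := rfl

lemma fdiff_comm (i j : Fin n) (f : (Fin n → ℤ) → ℂ) :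
    fdiff i (fdiff j f) = fdiff j (fdiff i f) := by
  funext k
  simp only [fdiff]
  have h : (fun t => (fun s => k s + if s = i then 1 else 0) t + if t = j then 1 else 0)
      = (fun t => (fun s => k s + if s = j then 1 else 0) t + if t = i then 1 else 0) := by
    funext t; ring
  rw [h]; ring

lemma fdiff_iterate_comm (i j : Fin n) (a : ℕ) (f : (Fin n → ℤ) → ℂ) :
    fdiff j ((fdiff i)^[a] f) = (fdiff i)^[a] (fdiff j f) := by
  induction a generalizing f with
  | zero => rfl
  | succ a ih =>
    rw [Function.iterate_succ_apply, Function.iterate_succ_apply, ih, fdiff_comm j i]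

lemma DLd_congr (l : List (Fin n)) : ∀ (α α' : Fin n → ℕ) (f : (Fin n → ℤ) → ℂ),
    (∀ i ∈ l, α i = α' i) → DLd l α f = DLd l α' f := by
  induction l with
  | nil => intro α α' f _; rfl
  | cons i l ih =>
    intro α α' f h
    rw [DLd_cons, DLd_cons, h i (List.mem_cons_self),
      ih α α' f fun t ht => h t (List.mem_cons_of_mem _ ht)]

lemma DLd_fdiff (l : List (Fin n)) (α : Fin n → ℕ) (j : Fin n) (f : (Fin n → ℤ) → ℂ) :
    fdiff j (DLd l α f) = DLd l α (fdiff j f) := by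
  induction l generalizing f with
  | nil => rfl
  | cons i l ih => rw [DLd_cons, DLd_cons, fdiff_iterate_comm, ih]

lemma DLd_add_single (l : List (Fin n)) (j : Fin n) : j ∈ l → l.Nodup →
    ∀ (α : Fin n → ℕ) (f : (Fin n → ℤ) → ℂ),
    DLd l (α + Pi.single j 1) f = fdiff j (DLd l α f) := by
  induction l with
  | nil => intro hl; cases hl
  | cons i l ih =>
    intro hl hnd α f
    rcases List.mem_cons.mp hl with hij | hjl
    · subst hij
      have hjl : j ∉ l := (List.nodup_cons.mp hnd).1
      have h1 : DLd l (α + Pi.single j 1) f = DLd l α f :=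
        DLd_congr _ _ _ _ fun t ht => by
          have ht' : t ≠ j := fun h => hjl (h ▸ ht)
          simp [Pi.single_apply, ht']
      rw [DLd_cons, DLd_cons, h1]
      have h2 : (α + Pi.single j 1 : Fin n → ℕ) j = α j + 1 := by simp
      rw [h2, Function.iterate_succ_apply']
    · have hij : i ≠ j := fun h => (List.nodup_cons.mp hnd).1 (h ▸ hjl)
      rw [DLd_cons, DLd_cons, ih hjl (List.nodup_cons.mp hnd).2]
      have h2 : (α + Pi.single j 1 : Fin n → ℕ) i = α i := by simp [Pi.single_apply, hij]
      rw [h2, fdiff_iterate_comm]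

lemma fdiffM_add_single (α : Fin n → ℕ) (j : Fin n) (f : (Fin n → ℤ) → ℂ) :
    fdiffM (α + Pi.single j 1) f = fdiff j (fdiffM α f) :=
  DLd_add_single _ j (List.mem_finRange j) (List.nodup_finRange n) α f

lemma fdiffM_fdiff (α : Fin n → ℕ) (j : Fin n) (f : (Fin n → ℤ) → ℂ) :
    fdiffM α (fdiff j f) = fdiff j (fdiffM α f) :=
  (DLd_fdiff _ _ _ _).symm

lemma fdiffM_zero (f : (Fin n → ℤ) → ℂ) : fdiffM (0 : Fin n → ℕ) f = f := by
  rw [fdiffM_eq_DLd]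
  induction (List.finRange n) with
  | nil => rfl
  | cons i l ih => rw [DLd_cons, ih]; rfl

lemma fdiff_mulco_ne (i j : Fin n) (hij : i ≠ j) (f : (Fin n → ℤ) → ℂ) :
    fdiff i (mulco j f) = mulco j (fdiff i f) := by
  funext k
  simp only [fdiff, mulco]
  have : (if j = i then (1:ℤ) else 0) = 0 := by simp [Ne.symm hij]
  rw [this]; push_cast; ring

lemma iterate_mulco_ne (i j : Fin n) (hij : i ≠ j) (a : ℕ) (f : (Fin n → ℤ) → ℂ) :
    (fdiff i)^[a] (mulco j f) = mulco j ((fdiff i)^[a] f) := by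
  induction a generalizing f with
  | zero => rfl
  | succ a ih => rw [Function.iterate_succ_apply, Function.iterate_succ_apply, fdiff_mulco_ne _ _ hij, ih]

lemma DLd_mulco (l : List (Fin n)) (j : Fin n) (α : Fin n → ℕ) (hα : α j = 0)
    (f : (Fin n → ℤ) → ℂ) : DLd l α (mulco j f) = mulco j (DLd l α f) := by
  induction l generalizing f with
  | nil => rfl
  | cons i l ih =>
    rw [DLd_cons, DLd_cons, ih]
    by_cases hij : i = j
    · subst hij; rw [hα]; rfl
    · exact iterate_mulco_ne i j hij _ _

lemma fdiffM_mulco (j : Fin n) (α : Fin n → ℕ) (hα : α j = 0) (f : (Fin n → ℤ) → ℂ) :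
    fdiffM α (mulco j f) = mulco j (fdiffM α f) :=
  DLd_mulco _ j α hα f

lemma fdiff_mulco_same (j : Fin n) (f : (Fin n → ℤ) → ℂ) :
    fdiff j (mulco j f) = fun k => (k j : ℂ) * fdiff j f k + fdiff j f k + f k := by
  funext k
  simp only [fdiff, mulco, if_pos, eq_self_iff_true, if_true]
  push_cast; ring

/-- Key one-coordinate Leibniz identity, iterated. -/
lemma fdiffM_mulco_fdiff (j : Fin n) (β : Fin n → ℕ) (f : (Fin n → ℤ) → ℂ) :
    fdiffM β (mulco j (fdiff j f)) = fun k =>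
      (k j : ℂ) * fdiffM (β + Pi.single j 1) f k
      + (β j : ℂ) * fdiffM (β + Pi.single j 1) f k
      + (β j : ℂ) * fdiffM β f k := by
  suffices h : ∀ (b : ℕ) (β : Fin n → ℕ), β j = b → fdiffM β (mulco j (fdiff j f)) = fun k =>
      (k j : ℂ) * fdiffM (β + Pi.single j 1) f k
      + (β j : ℂ) * fdiffM (β + Pi.single j 1) f k
      + (β j : ℂ) * fdiffM β f k from h (β j) β rfl
  intro b
  induction b with
  | zero =>
    intro β hβ
    rw [fdiffM_mulco j β hβ, fdiffM_add_single, fdiffM_fdiff]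
    funext k
    simp [mulco, hβ]
  | succ b ih =>
    intro β hβ
    have hup : Function.update β j b + Pi.single j 1 = β := by
      funext i
      by_cases hij : i = j
      · subst hij; simp [hβ]
      · simp [Pi.single_apply, hij]
    have h1 : fdiffM β (mulco j (fdiff j f)) =
        fdiff j (fdiffM (Function.update β j b) (mulco j (fdiff j f))) := by
      rw [← fdiffM_add_single, hup]
    rw [h1, ih (Function.update β j b) (by simp)]
    set G := fdiffM (Function.update β j b) f with hG
    have hFb : fdiffM β f = fdiff j G := by rw [← hup, fdiffM_add_single]
    have hFs : fdiffM (β + Pi.single j 1) f = fdiff j (fdiff j G) := by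
      rw [fdiffM_add_single, hFb]
    simp only [hup, Function.update_self, hFb, hFs, hβ]
    funext k
    simp only [fdiff]
    push_cast
    ring
end MAux
end
noncomputable section
namespace MAux
variable {n : ℕ}

lemma kpow_zero (k : Fin n → ℤ) : kpow k (0 : Fin n → ℕ) = 1 := by
  simp [kpow]

lemma kpow_add_single (k : Fin n → ℤ) (γ : Fin n → ℕ) (j : Fin n) :
    kpow k (γ + Pi.single j 1) = (k j : ℂ) * kpow k γ := by
  unfold kpow
  have h : ∀ i : Fin n, ((k i : ℂ)) ^ ((γ + Pi.single j 1 : Fin n → ℕ) i)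
      = (k i : ℂ) ^ (Pi.single j (1:ℕ) i) * (k i : ℂ) ^ (γ i) := fun i => by
    rw [Pi.add_apply, pow_add, mul_comm]
  rw [Finset.prod_congr rfl fun i _ => h i, Finset.prod_mul_distrib]
  congr 1
  rw [Finset.prod_eq_single j (fun i _ hij => by simp [Pi.single_apply, hij]) (by simp)]
  simp

lemma kpow_shift (k : Fin n → ℤ) (γ : Fin n → ℕ) (j : Fin n) (hγ : γ j = 0) :
    kpow (fun i => k i + if i = j then 1 else 0) γ = kpow k γ := by
  unfold kpow
  refine Finset.prod_congr rfl fun i _ => ?_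
  by_cases hij : i = j
  · subst hij; rw [hγ]; simp
  · simp [hij]

/-- The symbol `k^γ Δ^γ σ`. -/
def tgam (σ : (Fin n → ℤ) → (Fin n → ℝ) → ℂ) (γ : Fin n → ℕ) :
    (Fin n → ℤ) → (Fin n → ℝ) → ℂ :=
  fun k x => kpow k γ * fdiffM γ (fun k' => σ k' x) k

lemma tgam_zero (σ : (Fin n → ℤ) → (Fin n → ℝ) → ℂ) : tgam σ 0 = σ := by
  funext k x
  simp only [tgam, kpow_zero, fdiffM_zero, one_mul]

lemma tgam_step (σ : (Fin n → ℤ) → (Fin n → ℝ) → ℂ) (γ : Fin n → ℕ) (j : Fin n)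
    (hγ : γ j = 0) (x : Fin n → ℝ) :
    (fun k => tgam σ (γ + Pi.single j 1) k x) = mulco j (fdiff j (fun k => tgam σ γ k x)) := by
  funext k
  simp only [tgam, mulco, fdiff, kpow_add_single, kpow_shift k γ j hγ]
  rw [fdiffM_add_single]
  simp only [fdiff]
  ring

lemma contDiff_fdiff_iter (j : Fin n) (a : ℕ) :
    ∀ (G : (Fin n → ℤ) → (Fin n → ℝ) → ℂ), (∀ k, ContDiff ℝ (⊤ : ℕ∞) (fun y => G k y)) →
    ∀ k, ContDiff ℝ (⊤ : ℕ∞) (fun y => (fdiff j)^[a] (fun k' => G k' y) k) := by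
  induction a with
  | zero => intro G hG k; exact hG k
  | succ a ih =>
    intro G hG k
    have h : (fun y => (fdiff j)^[a+1] (fun k' => G k' y) k)
        = fun y => (fdiff j)^[a] (fun k' => fdiff j (fun k'' => G k'' y) k') k := by
      funext y; rw [Function.iterate_succ_apply]
    rw [h]
    exact ih (fun k' y => fdiff j (fun k'' => G k'' y) k') (fun k' => (hG _).sub (hG _)) k

lemma contDiff_DLd (l : List (Fin n)) (α : Fin n → ℕ) :
    ∀ (F : (Fin n → ℤ) → (Fin n → ℝ) → ℂ), (∀ k, ContDiff ℝ (⊤ : ℕ∞) (fun y => F k y)) →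
    ∀ k, ContDiff ℝ (⊤ : ℕ∞) (fun y => DLd l α (fun k' => F k' y) k) := by
  induction l with
  | nil => intro F hF k; exact hF k
  | cons i l ih =>
    intro F hF k
    have h : (fun y => DLd (i :: l) α (fun k' => F k' y) k)
        = fun y => (fdiff i)^[α i] (fun k' => DLd l α (fun k'' => F k'' y) k') k := rfl
    rw [h]
    exact contDiff_fdiff_iter i (α i) (fun k' y => DLd l α (fun k'' => F k'' y) k')
      (fun k' => ih F hF k') k

lemma contDiff_fdiffM (α : Fin n → ℕ) (F : (Fin n → ℤ) → (Fin n → ℝ) → ℂ)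
    (hF : ∀ k, ContDiff ℝ (⊤ : ℕ∞) (fun y => F k y)) (k : Fin n → ℤ) :
    ContDiff ℝ (⊤ : ℕ∞) (fun y => fdiffM α (fun k' => F k' y) k) :=
  contDiff_DLd (List.finRange n) α F hF k

lemma contDiff_tgam (σ : (Fin n → ℤ) → (Fin n → ℝ) → ℂ) (hσ : ∀ k, ContDiff ℝ (⊤ : ℕ∞) (σ k))
    (γ : Fin n → ℕ) (k : Fin n → ℤ) : ContDiff ℝ (⊤ : ℕ∞) (tgam σ γ k) :=
  contDiff_const.mul (contDiff_fdiffM γ σ hσ k)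

lemma hasDerivAt_comp_update (j : Fin n) (g : (Fin n → ℝ) → ℂ) (hg : Differentiable ℝ g)
    (x : Fin n → ℝ) (t : ℝ) :
    HasDerivAt (fun s => g (Function.update x j s))
      (fderiv ℝ g (Function.update x j t) (Pi.single j 1)) t :=
  (hg (Function.update x j t)).hasFDerivAt.comp_hasDerivAt t (hasDerivAt_update x j t)

lemma pderiv'_eq (j : Fin n) (g : (Fin n → ℝ) → ℂ) (hg : Differentiable ℝ g) :
    pderiv' j g = fun x => fderiv ℝ g x (Pi.single j 1) := by
  funext x
  have h := hasDerivAt_comp_update j g hg x (x j)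
  rw [Function.update_eq_self] at h
  exact h.deriv

lemma contDiff_DOne (j : Fin n) (g : (Fin n → ℝ) → ℂ) (hg : ContDiff ℝ (⊤ : ℕ∞) g) :
    ContDiff ℝ (⊤ : ℕ∞) (DOne j g) := by
  have h : DOne j g = fun x =>
      (1 / (2 * Real.pi * Complex.I)) * fderiv ℝ g x (Pi.single j 1) := by
    funext x
    simp only [DOne, pderiv'_eq j g (hg.differentiable (by simp))]
  rw [h]
  exact contDiff_const.mul ((hg.fderiv_right (by simp)).clm_apply contDiff_const)

lemma pderiv'_add (j : Fin n) (g₁ g₂ : (Fin n → ℝ) → ℂ) (h₁ : Differentiable ℝ g₁)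
    (h₂ : Differentiable ℝ g₂) (x : Fin n → ℝ) :
    pderiv' j (fun y => g₁ y + g₂ y) x = pderiv' j g₁ x + pderiv' j g₂ x := by
  simp only [pderiv'_eq j (fun y => g₁ y + g₂ y) (by exact h₁.add h₂), pderiv'_eq j g₁ h₁, pderiv'_eq j g₂ h₂]
  rw [fderiv_fun_add (h₁ x) (h₂ x)]
  simp

lemma pderiv'_const_mul (j : Fin n) (c : ℂ) (g : (Fin n → ℝ) → ℂ) (hg : Differentiable ℝ g)
    (x : Fin n → ℝ) : pderiv' j (fun y => c * g y) x = c * pderiv' j g x := by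
  simp only [pderiv'_eq j _ (hg.const_mul c), pderiv'_eq j g hg]
  rw [fderiv_const_mul (hg x) c]
  simp

lemma DOne_add (j : Fin n) (g₁ g₂ : (Fin n → ℝ) → ℂ) (h₁ : Differentiable ℝ g₁)
    (h₂ : Differentiable ℝ g₂) (x : Fin n → ℝ) :
    DOne j (fun y => g₁ y + g₂ y) x = DOne j g₁ x + DOne j g₂ x := by
  simp only [DOne, pderiv'_add j g₁ g₂ h₁ h₂]
  ring

lemma DOne_const_mul (j : Fin n) (c : ℂ) (g : (Fin n → ℝ) → ℂ) (hg : Differentiable ℝ g)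
    (x : Fin n → ℝ) : DOne j (fun y => c * g y) x = c * DOne j g x := by
  simp only [DOne, pderiv'_const_mul j c g hg]
  ring

lemma contDiff_DShift (j : Fin n) (ℓ : ℕ) (g : (Fin n → ℝ) → ℂ) (hg : ContDiff ℝ (⊤ : ℕ∞) g) :
    ContDiff ℝ (⊤ : ℕ∞) (DShift j ℓ g) := by
  induction ℓ with
  | zero => exact hg
  | succ ℓ ih => exact (contDiff_DOne j _ ih).sub (contDiff_const.mul ih)

lemma DShift_add (j : Fin n) (ℓ : ℕ) (g₁ g₂ : (Fin n → ℝ) → ℂ) (h₁ : ContDiff ℝ (⊤ : ℕ∞) g₁)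
    (h₂ : ContDiff ℝ (⊤ : ℕ∞) g₂) :
    DShift j ℓ (fun y => g₁ y + g₂ y) = fun x => DShift j ℓ g₁ x + DShift j ℓ g₂ x := by
  induction ℓ with
  | zero => rfl
  | succ ℓ ih =>
    funext x
    show DOne j (DShift j ℓ fun y => g₁ y + g₂ y) x - (ℓ : ℂ) * DShift j ℓ (fun y => g₁ y + g₂ y) x
      = (DOne j (DShift j ℓ g₁) x - (ℓ : ℂ) * DShift j ℓ g₁ x)
        + (DOne j (DShift j ℓ g₂) x - (ℓ : ℂ) * DShift j ℓ g₂ x)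
    rw [ih, DOne_add j _ _ ((contDiff_DShift j ℓ g₁ h₁).differentiable (by simp))
      ((contDiff_DShift j ℓ g₂ h₂).differentiable (by simp))]
    ring

lemma DShift_const_mul (j : Fin n) (ℓ : ℕ) (c : ℂ) (g : (Fin n → ℝ) → ℂ)
    (hg : ContDiff ℝ (⊤ : ℕ∞) g) :
    DShift j ℓ (fun y => c * g y) = fun x => c * DShift j ℓ g x := by
  induction ℓ with
  | zero => rfl
  | succ ℓ ih =>
    funext x
    show DOne j (DShift j ℓ fun y => c * g y) x - (ℓ : ℂ) * DShift j ℓ (fun y => c * g y) x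
      = c * (DOne j (DShift j ℓ g) x - (ℓ : ℂ) * DShift j ℓ g x)
    rw [ih, DOne_const_mul j c _ ((contDiff_DShift j ℓ g hg).differentiable (by simp))]
    ring

def DLx (l : List (Fin n)) (β : Fin n → ℕ) (g : (Fin n → ℝ) → ℂ) : (Fin n → ℝ) → ℂ :=
  (l.map (fun j => DShift j (β j))).foldr (· ∘ ·) id g

lemma DM_eq_DLx (β : Fin n → ℕ) (g : (Fin n → ℝ) → ℂ) : DM β g = DLx (List.finRange n) β g := rfl

lemma DLx_cons (i : Fin n) (l : List (Fin n)) (β : Fin n → ℕ) (g : (Fin n → ℝ) → ℂ) :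
    DLx (i :: l) β g = DShift i (β i) (DLx l β g) := rfl

lemma contDiff_DLx (l : List (Fin n)) (β : Fin n → ℕ) (g : (Fin n → ℝ) → ℂ)
    (hg : ContDiff ℝ (⊤ : ℕ∞) g) : ContDiff ℝ (⊤ : ℕ∞) (DLx l β g) := by
  induction l with
  | nil => exact hg
  | cons i l ih => exact contDiff_DShift i (β i) _ ih

lemma DLx_add (l : List (Fin n)) (β : Fin n → ℕ) (g₁ g₂ : (Fin n → ℝ) → ℂ)
    (h₁ : ContDiff ℝ (⊤ : ℕ∞) g₁) (h₂ : ContDiff ℝ (⊤ : ℕ∞) g₂) :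
    DLx l β (fun y => g₁ y + g₂ y) = fun x => DLx l β g₁ x + DLx l β g₂ x := by
  induction l with
  | nil => rfl
  | cons i l ih =>
    rw [DLx_cons, ih, DLx_cons, DLx_cons]
    exact DShift_add i (β i) _ _ (contDiff_DLx l β g₁ h₁) (contDiff_DLx l β g₂ h₂)

lemma DLx_const_mul (l : List (Fin n)) (β : Fin n → ℕ) (c : ℂ) (g : (Fin n → ℝ) → ℂ)
    (hg : ContDiff ℝ (⊤ : ℕ∞) g) :
    DLx l β (fun y => c * g y) = fun x => c * DLx l β g x := by
  induction l with
  | nil => rfl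
  | cons i l ih =>
    rw [DLx_cons, ih, DLx_cons]
    exact DShift_const_mul i (β i) c _ (contDiff_DLx l β g hg)

lemma DM_comb3 (β : Fin n → ℕ) (c₁ c₂ c₃ : ℂ) (f₁ f₂ f₃ : (Fin n → ℝ) → ℂ)
    (h₁ : ContDiff ℝ (⊤ : ℕ∞) f₁) (h₂ : ContDiff ℝ (⊤ : ℕ∞) f₂) (h₃ : ContDiff ℝ (⊤ : ℕ∞) f₃) (x : Fin n → ℝ) :
    DM β (fun y => c₁ * f₁ y + c₂ * f₂ y + c₃ * f₃ y) x
      = c₁ * DM β f₁ x + c₂ * DM β f₂ x + c₃ * DM β f₃ x := by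
  simp only [DM_eq_DLx]
  rw [DLx_add _ β _ _ ((contDiff_const.mul h₁).add (contDiff_const.mul h₂)) (contDiff_const.mul h₃),
    DLx_add _ β _ _ (contDiff_const.mul h₁) (contDiff_const.mul h₂),
    DLx_const_mul _ β c₁ f₁ h₁, DLx_const_mul _ β c₂ f₂ h₂, DLx_const_mul _ β c₃ f₃ h₃]

end MAux
end
noncomputable section
namespace MAux
variable {n : ℕ}

lemma key_symb (σ : (Fin n → ℤ) → (Fin n → ℝ) → ℂ) (hσ : ∀ k, ContDiff ℝ (⊤ : ℕ∞) (σ k))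
    (γ₂ : Fin n → ℕ) (j : Fin n) (h2 : γ₂ j = 0) (δ β : Fin n → ℕ) (k : Fin n → ℤ)
    (x : Fin n → ℝ) :
    symbDiff (tgam σ (γ₂ + Pi.single j 1)) δ β k x
      = (k j : ℂ) * symbDiff (tgam σ γ₂) (δ + Pi.single j 1) β k x
        + (δ j : ℂ) * symbDiff (tgam σ γ₂) (δ + Pi.single j 1) β k x
        + (δ j : ℂ) * symbDiff (tgam σ γ₂) δ β k x := by
  have hy : (fun y => fdiffM δ (fun k' => tgam σ (γ₂ + Pi.single j 1) k' y) k)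
      = fun y => (k j : ℂ) * fdiffM (δ + Pi.single j 1) (fun k' => tgam σ γ₂ k' y) k
        + (δ j : ℂ) * fdiffM (δ + Pi.single j 1) (fun k' => tgam σ γ₂ k' y) k
        + (δ j : ℂ) * fdiffM δ (fun k' => tgam σ γ₂ k' y) k := by
    funext y
    rw [tgam_step σ γ₂ j h2 y, fdiffM_mulco_fdiff j δ (fun k' => tgam σ γ₂ k' y)]
  have hsm : ∀ ι : Fin n → ℕ, ContDiff ℝ (⊤ : ℕ∞) (fun y => fdiffM ι (fun k' => tgam σ γ₂ k' y) k) :=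
    fun ι => contDiff_fdiffM ι (tgam σ γ₂) (contDiff_tgam σ hσ γ₂) k
  show DM β _ x = _
  rw [hy]
  exact DM_comb3 β (k j) (δ j) (δ j) _ _ _ (hsm _) (hsm _) (hsm _) x

lemma key_id (σ : (Fin n → ℤ) → (Fin n → ℝ) → ℂ) (hσ : ∀ k, ContDiff ℝ (⊤ : ℕ∞) (σ k))
    (γ₁ γ₂ : Fin n → ℕ) (j : Fin n) (h1 : γ₁ j = 0) (h2 : γ₂ j = 0)
    (α β : Fin n → ℕ) (k : Fin n → ℤ) (x : Fin n → ℝ) :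
    kpow k (γ₁ + Pi.single j 1) * symbDiff (tgam σ γ₂) (α + (γ₁ + Pi.single j 1)) β k x
    = kpow k γ₁ * symbDiff (tgam σ (γ₂ + Pi.single j 1)) (α + γ₁) β k x
      - (α j : ℂ) * (kpow k γ₁ * symbDiff (tgam σ γ₂) ((α + Pi.single j 1) + γ₁) β k x)
      - (α j : ℂ) * (kpow k γ₁ * symbDiff (tgam σ γ₂) (α + γ₁) β k x) := by
  have e1 : α + (γ₁ + Pi.single j 1) = (α + γ₁) + Pi.single j 1 := (add_assoc α γ₁ _).symm
  have e2 : (α + Pi.single j 1) + γ₁ = (α + γ₁) + Pi.single j 1 := add_right_comm α _ γ₁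
  have hδ : (α + γ₁ : Fin n → ℕ) j = α j := by simp [h1]
  rw [e1, e2, kpow_add_single, key_symb σ hσ γ₂ j h2 (α + γ₁) β k x, hδ]
  ring

/-- The mixed estimate predicate. -/
def Pp (Λ : (Fin n → ℤ) → ℝ) (ρ m : ℝ) (σ : (Fin n → ℤ) → (Fin n → ℝ) → ℂ)
    (γ₁ γ₂ : Fin n → ℕ) : Prop :=
  ∀ α β : Fin n → ℕ, ∃ C > (0:ℝ), ∀ k x,
    ‖kpow k γ₁ * symbDiff (tgam σ γ₂) (α + γ₁) β k x‖
      ≤ C * Λ k ^ (m - ρ * (mlen α : ℝ))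

lemma mlen_add_single (α : Fin n → ℕ) (j : Fin n) :
    mlen (α + Pi.single j 1) = mlen α + 1 := by
  simp [mlen, Finset.sum_add_distrib, Pi.single_apply]

section Est
variable {Λ : (Fin n → ℤ) → ℝ} {ρ m : ℝ} {σ : (Fin n → ℤ) → (Fin n → ℝ) → ℂ} {c0 : ℝ}

lemma lam_pos (hc0 : 0 < c0) (hval : ∀ k, c0 ≤ Λ k) (k : Fin n → ℤ) : 0 < Λ k :=
  lt_of_lt_of_le hc0 (hval k)

lemma rpow_drop (hρ : 0 < ρ) (hc0 : 0 < c0) (hval : ∀ k, c0 ≤ Λ k) (k : Fin n → ℤ) (s : ℝ) :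
    Λ k ^ (s - ρ) ≤ c0 ^ (-ρ) * Λ k ^ s := by
  have hΛ := lam_pos hc0 hval k
  have h1 : c0 ^ (-ρ) * Λ k ^ s = Λ k ^ s / c0 ^ ρ := by
    rw [Real.rpow_neg (le_of_lt hc0)]; ring
  rw [Real.rpow_sub hΛ, h1]
  exact div_le_div_of_nonneg_left (le_of_lt (Real.rpow_pos_of_pos hΛ s))
    (Real.rpow_pos_of_pos hc0 ρ) (Real.rpow_le_rpow (le_of_lt hc0) (hval k) (le_of_lt hρ))

lemma exp_shift (hρ : True) (α : Fin n → ℕ) (j : Fin n) :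
    m - ρ * (mlen (α + Pi.single j 1) : ℝ) = (m - ρ * (mlen α : ℝ)) - ρ := by
  rw [mlen_add_single]; push_cast; ring

/-- Step lemma, direction (b): towards larger `γ₁`. -/
lemma step_b (hσ : ∀ k, ContDiff ℝ (⊤ : ℕ∞) (σ k)) (hρ : 0 < ρ) (hc0 : 0 < c0)
    (hval : ∀ k, c0 ≤ Λ k) (γ₁ γ₂ : Fin n → ℕ) (j : Fin n) (h1 : γ₁ j = 0) (h2 : γ₂ j = 0)
    (hA : Pp Λ ρ m σ γ₁ (γ₂ + Pi.single j 1)) (hB : Pp Λ ρ m σ γ₁ γ₂) :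
    Pp Λ ρ m σ (γ₁ + Pi.single j 1) γ₂ := by
  intro α β
  obtain ⟨C₁, hC₁, hT₁⟩ := hA α β
  obtain ⟨C₂, hC₂, hT₂⟩ := hB (α + Pi.single j 1) β
  obtain ⟨C₃, hC₃, hT₃⟩ := hB α β
  refine ⟨C₁ + (α j : ℝ) * (c0 ^ (-ρ) * C₂) + (α j : ℝ) * C₃, by positivity, fun k x => ?_⟩
  rw [key_id σ hσ γ₁ γ₂ j h1 h2 α β k x]
  set T₁ := kpow k γ₁ * symbDiff (tgam σ (γ₂ + Pi.single j 1)) (α + γ₁) β k x with hT1d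
  set T₂ := kpow k γ₁ * symbDiff (tgam σ γ₂) ((α + Pi.single j 1) + γ₁) β k x with hT2d
  set T₃ := kpow k γ₁ * symbDiff (tgam σ γ₂) (α + γ₁) β k x with hT3d
  have tri : ‖T₁ - (α j : ℂ) * T₂ - (α j : ℂ) * T₃‖
      ≤ ‖T₁‖ + (α j : ℝ) * ‖T₂‖ + (α j : ℝ) * ‖T₃‖ := by
    calc ‖T₁ - (α j : ℂ) * T₂ - (α j : ℂ) * T₃‖
        ≤ ‖T₁ - (α j : ℂ) * T₂‖ + ‖(α j : ℂ) * T₃‖ :=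
          norm_sub_le _ _
      _ ≤ ‖T₁‖ + ‖(α j : ℂ) * T₂‖ + ‖(α j : ℂ) * T₃‖ := by
          have := norm_sub_le T₁ ((α j : ℂ) * T₂)
          linarith
      _ = ‖T₁‖ + (α j : ℝ) * ‖T₂‖ + (α j : ℝ) * ‖T₃‖ := by
          simp only [norm_mul, Complex.norm_natCast]
  have h2' : ‖T₂‖ ≤ c0 ^ (-ρ) * C₂ * Λ k ^ (m - ρ * (mlen α : ℝ)) := by
    have := hT₂ k x
    have hd : Λ k ^ (m - ρ * (mlen (α + Pi.single j 1) : ℝ))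
        ≤ c0 ^ (-ρ) * Λ k ^ (m - ρ * (mlen α : ℝ)) := by
      rw [exp_shift trivial]
      exact rpow_drop hρ hc0 hval k _
    calc ‖T₂‖ ≤ C₂ * Λ k ^ (m - ρ * (mlen (α + Pi.single j 1) : ℝ)) := this
      _ ≤ C₂ * (c0 ^ (-ρ) * Λ k ^ (m - ρ * (mlen α : ℝ))) := by
          exact mul_le_mul_of_nonneg_left hd (le_of_lt hC₂)
      _ = c0 ^ (-ρ) * C₂ * Λ k ^ (m - ρ * (mlen α : ℝ)) := by ring
  have h1' := hT₁ k x
  have h3' := hT₃ k x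
  have hj : (0:ℝ) ≤ (α j : ℝ) := Nat.cast_nonneg _
  calc ‖T₁ - (α j : ℂ) * T₂ - (α j : ℂ) * T₃‖
      ≤ ‖T₁‖ + (α j : ℝ) * ‖T₂‖ + (α j : ℝ) * ‖T₃‖ := tri
    _ ≤ C₁ * Λ k ^ (m - ρ * (mlen α : ℝ))
          + (α j : ℝ) * (c0 ^ (-ρ) * C₂ * Λ k ^ (m - ρ * (mlen α : ℝ)))
          + (α j : ℝ) * (C₃ * Λ k ^ (m - ρ * (mlen α : ℝ))) := by
        have := mul_le_mul_of_nonneg_left h2' hj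
        have := mul_le_mul_of_nonneg_left h3' hj
        gcongr
    _ = (C₁ + (α j : ℝ) * (c0 ^ (-ρ) * C₂) + (α j : ℝ) * C₃) * Λ k ^ (m - ρ * (mlen α : ℝ)) := by
        ring

/-- Step lemma, direction (a): towards larger `γ₂`. -/
lemma step_a (hσ : ∀ k, ContDiff ℝ (⊤ : ℕ∞) (σ k)) (hρ : 0 < ρ) (hc0 : 0 < c0)
    (hval : ∀ k, c0 ≤ Λ k) (γ₁ γ₂ : Fin n → ℕ) (j : Fin n) (h1 : γ₁ j = 0) (h2 : γ₂ j = 0)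
    (hA : Pp Λ ρ m σ (γ₁ + Pi.single j 1) γ₂) (hB : Pp Λ ρ m σ γ₁ γ₂) :
    Pp Λ ρ m σ γ₁ (γ₂ + Pi.single j 1) := by
  intro α β
  obtain ⟨C₁, hC₁, hT₁⟩ := hA α β
  obtain ⟨C₂, hC₂, hT₂⟩ := hB (α + Pi.single j 1) β
  obtain ⟨C₃, hC₃, hT₃⟩ := hB α β
  refine ⟨C₁ + (α j : ℝ) * (c0 ^ (-ρ) * C₂) + (α j : ℝ) * C₃, by positivity, fun k x => ?_⟩
  have hid := key_id σ hσ γ₁ γ₂ j h1 h2 α β k x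
  set X := kpow k (γ₁ + Pi.single j 1) * symbDiff (tgam σ γ₂) (α + (γ₁ + Pi.single j 1)) β k x
    with hXd
  set T₁ := kpow k γ₁ * symbDiff (tgam σ (γ₂ + Pi.single j 1)) (α + γ₁) β k x with hT1d
  set T₂ := kpow k γ₁ * symbDiff (tgam σ γ₂) ((α + Pi.single j 1) + γ₁) β k x with hT2d
  set T₃ := kpow k γ₁ * symbDiff (tgam σ γ₂) (α + γ₁) β k x with hT3d
  have hTeq : T₁ = X + (α j : ℂ) * T₂ + (α j : ℂ) * T₃ := by rw [hid]; ring
  have tri : ‖T₁‖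
      ≤ ‖X‖ + (α j : ℝ) * ‖T₂‖ + (α j : ℝ) * ‖T₃‖ := by
    rw [hTeq]
    calc ‖X + (α j : ℂ) * T₂ + (α j : ℂ) * T₃‖
        ≤ ‖X + (α j : ℂ) * T₂‖ + ‖(α j : ℂ) * T₃‖ :=
          norm_add_le _ _
      _ ≤ ‖X‖ + ‖(α j : ℂ) * T₂‖ + ‖(α j : ℂ) * T₃‖ := by
          have := norm_add_le X ((α j : ℂ) * T₂)
          linarith
      _ = ‖X‖ + (α j : ℝ) * ‖T₂‖ + (α j : ℝ) * ‖T₃‖ := by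
          simp only [norm_mul, Complex.norm_natCast]
  have h2' : ‖T₂‖ ≤ c0 ^ (-ρ) * C₂ * Λ k ^ (m - ρ * (mlen α : ℝ)) := by
    have hd : Λ k ^ (m - ρ * (mlen (α + Pi.single j 1) : ℝ))
        ≤ c0 ^ (-ρ) * Λ k ^ (m - ρ * (mlen α : ℝ)) := by
      rw [exp_shift trivial]
      exact rpow_drop hρ hc0 hval k _
    calc ‖T₂‖ ≤ C₂ * Λ k ^ (m - ρ * (mlen (α + Pi.single j 1) : ℝ)) := hT₂ k x
      _ ≤ C₂ * (c0 ^ (-ρ) * Λ k ^ (m - ρ * (mlen α : ℝ))) :=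
          mul_le_mul_of_nonneg_left hd (le_of_lt hC₂)
      _ = c0 ^ (-ρ) * C₂ * Λ k ^ (m - ρ * (mlen α : ℝ)) := by ring
  have h1' := hT₁ k x
  have h3' := hT₃ k x
  have hj : (0:ℝ) ≤ (α j : ℝ) := Nat.cast_nonneg _
  calc ‖T₁‖
      ≤ ‖X‖ + (α j : ℝ) * ‖T₂‖ + (α j : ℝ) * ‖T₃‖ := tri
    _ ≤ C₁ * Λ k ^ (m - ρ * (mlen α : ℝ))
          + (α j : ℝ) * (c0 ^ (-ρ) * C₂ * Λ k ^ (m - ρ * (mlen α : ℝ)))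
          + (α j : ℝ) * (C₃ * Λ k ^ (m - ρ * (mlen α : ℝ))) := by gcongr
    _ = (C₁ + (α j : ℝ) * (c0 ^ (-ρ) * C₂) + (α j : ℝ) * C₃) * Λ k ^ (m - ρ * (mlen α : ℝ)) := by
        ring

end Est
end MAux
end
noncomputable section
namespace MAux
variable {n : ℕ}

lemma gdecomp (γ : Fin n → ℕ) (j : Fin n) (h : γ j = 1) :
    Function.update γ j 0 + Pi.single j 1 = γ := by
  funext i
  by_cases hij : i = j
  · subst hij; simp [h]
  · simp [Pi.single_apply, hij, Function.update_of_ne hij]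

lemma mlen_update (γ : Fin n → ℕ) (j : Fin n) (h : γ j = 1) :
    mlen (Function.update γ j 0) + 1 = mlen γ := by
  conv_rhs => rw [← gdecomp γ j h]
  rw [mlen_add_single]

section Ind
variable {Λ : (Fin n → ℤ) → ℝ} {ρ m : ℝ} {σ : (Fin n → ℤ) → (Fin n → ℝ) → ℂ} {c0 : ℝ}

lemma forward_all (hσ : ∀ k, ContDiff ℝ (⊤ : ℕ∞) (σ k)) (hρ : 0 < ρ) (hc0 : 0 < c0)
    (hval : ∀ k, c0 ≤ Λ k)
    (hbase : ∀ γ₂ : Fin n → ℕ, (∀ i, γ₂ i ≤ 1) → Pp Λ ρ m σ 0 γ₂) :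
    ∀ (N : ℕ) (γ₁ γ₂ : Fin n → ℕ), mlen γ₁ ≤ N → (∀ i, γ₁ i + γ₂ i ≤ 1) →
      Pp Λ ρ m σ γ₁ γ₂ := by
  intro N
  induction N with
  | zero =>
    intro γ₁ γ₂ hm hd
    have hsum : (∑ i, γ₁ i) = 0 := Nat.le_zero.mp hm
    have h0 : γ₁ = 0 := by
      funext i
      exact (Finset.sum_eq_zero_iff).mp hsum i (Finset.mem_univ i)
    subst h0
    exact hbase γ₂ (fun i => by have := hd i; omega)
  | succ N ih =>
    intro γ₁ γ₂ hm hd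
    by_cases hN : mlen γ₁ ≤ N
    · exact ih γ₁ γ₂ hN hd
    · have hne : (∑ i, γ₁ i) ≠ 0 := by
        have : mlen γ₁ ≠ 0 := by omega
        exact this
      obtain ⟨j, -, hj⟩ := Finset.exists_ne_zero_of_sum_ne_zero hne
      have hj1 : γ₁ j = 1 := by have := hd j; omega
      have h2 : γ₂ j = 0 := by have := hd j; omega
      have hml : mlen (Function.update γ₁ j 0) ≤ N := by
        have := mlen_update γ₁ j hj1; omega
      have hu0 : Function.update γ₁ j 0 j = 0 := Function.update_self j 0 γ₁
      have hP1 : Pp Λ ρ m σ (Function.update γ₁ j 0) (γ₂ + Pi.single j 1) := by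
        apply ih _ _ hml
        intro i
        rcases eq_or_ne i j with hij | hij
        · subst hij; simp [h2]
        · have := hd i
          simp only [Function.update_apply, Pi.add_apply, Pi.single_apply, if_neg hij]
          omega
      have hP2 : Pp Λ ρ m σ (Function.update γ₁ j 0) γ₂ := by
        apply ih _ _ hml
        intro i
        rcases eq_or_ne i j with hij | hij
        · subst hij; simp [h2]
        · have := hd i
          simp only [Function.update_apply, if_neg hij]
          omega
      have hstep := step_b hσ hρ hc0 hval _ γ₂ j hu0 h2 hP1 hP2
      rwa [gdecomp γ₁ j hj1] at hstep

lemma backward_all (hσ : ∀ k, ContDiff ℝ (⊤ : ℕ∞) (σ k)) (hρ : 0 < ρ) (hc0 : 0 < c0)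
    (hval : ∀ k, c0 ≤ Λ k)
    (hbase : ∀ γ₁ : Fin n → ℕ, (∀ i, γ₁ i ≤ 1) → Pp Λ ρ m σ γ₁ 0) :
    ∀ (N : ℕ) (γ₁ γ₂ : Fin n → ℕ), mlen γ₂ ≤ N → (∀ i, γ₁ i + γ₂ i ≤ 1) →
      Pp Λ ρ m σ γ₁ γ₂ := by
  intro N
  induction N with
  | zero =>
    intro γ₁ γ₂ hm hd
    have hsum : (∑ i, γ₂ i) = 0 := Nat.le_zero.mp hm
    have h0 : γ₂ = 0 := by
      funext i
      exact (Finset.sum_eq_zero_iff).mp hsum i (Finset.mem_univ i)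
    subst h0
    exact hbase γ₁ (fun i => by have := hd i; omega)
  | succ N ih =>
    intro γ₁ γ₂ hm hd
    by_cases hN : mlen γ₂ ≤ N
    · exact ih γ₁ γ₂ hN hd
    · have hne : (∑ i, γ₂ i) ≠ 0 := by
        have : mlen γ₂ ≠ 0 := by omega
        exact this
      obtain ⟨j, -, hj⟩ := Finset.exists_ne_zero_of_sum_ne_zero hne
      have hj1 : γ₂ j = 1 := by have := hd j; omega
      have h1 : γ₁ j = 0 := by have := hd j; omega
      have hml : mlen (Function.update γ₂ j 0) ≤ N := by
        have := mlen_update γ₂ j hj1; omega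
      have hu0 : Function.update γ₂ j 0 j = 0 := Function.update_self j 0 γ₂
      have hP1 : Pp Λ ρ m σ (γ₁ + Pi.single j 1) (Function.update γ₂ j 0) := by
        apply ih _ _ hml
        intro i
        rcases eq_or_ne i j with hij | hij
        · subst hij; simp [h1]
        · have := hd i
          simp only [Function.update_apply, Pi.add_apply, Pi.single_apply, if_neg hij]
          omega
      have hP2 : Pp Λ ρ m σ γ₁ (Function.update γ₂ j 0) := by
        apply ih _ _ hml
        intro i
        rcases eq_or_ne i j with hij | hij
        · subst hij; simp [h1]
        · have := hd i
          simp only [Function.update_apply, if_neg hij]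
          omega
      have hstep := step_a hσ hρ hc0 hval γ₁ _ j h1 hu0 hP1 hP2
      rwa [gdecomp γ₂ j hj1] at hstep

end Ind
end MAux
end
noncomputable section
variable {n : ℕ}

theorem M_class_iff_pointwise_estimates (Λ : (Fin n → ℤ) → ℝ) (μ0 μ1 μ ρ m : ℝ)
    (hΛ : IsWeight Λ μ0 μ1 μ) (hρ : 0 < ρ) (hρμ : ρ ≤ 1 / μ)
    (σ : (Fin n → ℤ) → (Fin n → ℝ) → ℂ) (hσ : ∀ k, ContDiff ℝ (⊤ : ℕ∞) (σ k)) :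
    InM Λ ρ m σ ↔
      ∀ α β γ : Fin n → ℕ, (∀ j, γ j ≤ 1) →
        ∃ C > (0 : ℝ), ∀ k x,
          ‖kpow k γ * symbDiff σ (α + γ) β k x‖ ≤
            C * Λ k ^ (m - ρ * (mlen α : ℝ)) := by
  obtain ⟨C0, hC0, hlow⟩ := hΛ.lower
  have hval : ∀ k, C0 ≤ Λ k := by
    intro k
    have hz : (0:ℝ) ≤ znorm k := Real.sqrt_nonneg _
    have h1 : (1:ℝ) ≤ (1 + znorm k) ^ μ0 :=
      Real.one_le_rpow (by linarith) (le_of_lt hΛ.exp0)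
    calc C0 = C0 * 1 := by ring
      _ ≤ C0 * (1 + znorm k) ^ μ0 := mul_le_mul_of_nonneg_left h1 (le_of_lt hC0)
      _ ≤ Λ k := hlow k
  constructor
  · intro hM α β γ hγ
    have hbase : ∀ γ₂ : Fin n → ℕ, (∀ i, γ₂ i ≤ 1) → MAux.Pp Λ ρ m σ 0 γ₂ := by
      intro γ₂ hγ₂ α' β'
      obtain ⟨C, hC, hb⟩ := (hM γ₂ hγ₂).2 α' β'
      refine ⟨C, hC, fun k x => ?_⟩
      have h := hb k x
      simp only [MAux.kpow_zero, one_mul, add_zero]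
      exact h
    have hP := MAux.forward_all hσ hρ hC0 hval hbase (mlen γ) γ 0 le_rfl
      (fun i => by simpa using hγ i)
    obtain ⟨C, hC, hb⟩ := hP α β
    refine ⟨C, hC, fun k x => ?_⟩
    have h := hb k x
    rwa [MAux.tgam_zero] at h
  · intro hR γ hγ
    constructor
    · exact fun k => MAux.contDiff_tgam σ hσ γ k
    · intro α β
      have hbase : ∀ γ₁ : Fin n → ℕ, (∀ i, γ₁ i ≤ 1) → MAux.Pp Λ ρ m σ γ₁ 0 := by
        intro γ₁ hγ₁ α' β'
        obtain ⟨C, hC, hb⟩ := hR α' β' γ₁ hγ₁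
        refine ⟨C, hC, fun k x => ?_⟩
        rw [MAux.tgam_zero]
        exact hb k x
      have hP := MAux.backward_all hσ hρ hC0 hval hbase (mlen γ) 0 γ le_rfl
        (fun i => by simpa using hγ i)
      obtain ⟨C, hC, hb⟩ := hP α β
      refine ⟨C, hC, fun k x => ?_⟩
      have h := hb k x
      simp only [MAux.kpow_zero, one_mul, add_zero] at h
      exact h

end
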